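/- For $d = 1$, constant $\alpha \in (0,2)$, and $u(x) = e^{-x^2}$, the fractional Laplacian satisfies $(-\Delta)^{\alpha/2} u(x) = \frac{2^{\alpha}\,\Gamma(\frac{1+\alpha}{2})}{\Gamma(1/2)}\, {}_1F_1\big(\tfrac{1+\alpha}{2};\ \tfrac{1}{2};\ -x^2\big)$, where the fractional Laplacian is defined via the Fourier multiplier $|2\pi\xi|^{\alpha}$. -/

import Mathlib

open MeasureTheory Real

/-- Rising factorial (Pochhammer symbol). -/
noncomputable def poch (a : ℝ) (n : ℕ) : ℝ := ∏ k ∈ Finset.range n, (a + k)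

/-- Confluent hypergeometric function ₁F₁. -/
noncomputable def hyp1F1 (a b z : ℝ) : ℝ :=
  ∑' n : ℕ, poch a n / poch b n * z ^ n / n.factorial

/-!
The Fourier transform of `e^{-t²}` is `√π e^{-π²ξ²}`, an even function, so the integral is the
cosine transform of `|ξ|^α e^{-π²ξ²}` at frequency `2πx`. Expanding the cosine in its Taylor series
and integrating termwise, the `2n`-th moment is `(π²)^{-(α+1)/2-n} Γ((α+1)/2 + n)`, and
`Γ(a + n) = Γ(a) (a)ₙ` together with `(2n)! = 4ⁿ n! (1/2)ₙ` turns the series into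
`₁F₁((1+α)/2; 1/2; -x²)`. Termwise integration is legitimate because the `₁F₁` series converges
absolutely, its coefficients `(a)ₙ / (1/2)ₙ` growing at most geometrically.
-/

open Set FourierTransform

theorem integrable_comp_abs {E : Type*} [NormedAddCommGroup E] {f : ℝ → E}
    (hf : IntegrableOn f (Ioi 0)) : Integrable fun x => f |x| := by
  have hIoi : IntegrableOn (fun x => f |x|) (Ioi 0) :=
    hf.congr_fun (fun x hx => by rw [abs_of_pos hx]) measurableSet_Ioi
  have hIio : IntegrableOn (fun x => f |x|) (Iio 0) := by
    rw [← (Measure.measurePreserving_neg (volume : Measure ℝ)).integrableOn_comp_preimage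
      (Homeomorph.neg ℝ).measurableEmbedding]
    simpa [Function.comp_def] using hIoi
  rw [← integrableOn_univ, ← Iio_union_Ici (a := (0 : ℝ)), integrableOn_union,
    integrableOn_Ici_iff_integrableOn_Ioi]
  exact ⟨hIio, hIoi⟩

section GaussianMoments

variable {b s : ℝ}

theorem integrable_abs_rpow_mul_exp_neg_mul_sq (hb : 0 < b) (hs : -1 < s) :
    Integrable fun x : ℝ => |x| ^ s * exp (-b * x ^ 2) := by
  simpa only [sq_abs] using integrable_comp_abs (integrableOn_rpow_mul_exp_neg_mul_sq hb hs)

theorem integral_abs_rpow_mul_exp_neg_mul_sq (hb : 0 < b) (hs : -1 < s) :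
    ∫ x : ℝ, |x| ^ s * exp (-b * x ^ 2) = b ^ (-(s + 1) / 2) * Gamma ((s + 1) / 2) := by
  have h := integral_comp_abs (f := fun x => x ^ s * exp (-b * x ^ 2))
  simp only [sq_abs] at h
  have hIoi := integral_rpow_mul_exp_neg_mul_rpow two_pos hs hb
  simp only [rpow_two] at hIoi
  rw [h, hIoi]
  ring

theorem abs_rpow_mul_pow_two_mul (hs : -1 < s) (x : ℝ) (n : ℕ) :
    |x| ^ s * x ^ (2 * n) = |x| ^ (s + (2 * n : ℕ)) := by
  rcases n.eq_zero_or_pos with rfl | hn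
  · simp
  · have hn' : (1 : ℝ) ≤ n := by exact_mod_cast hn
    rw [rpow_add_natCast' (abs_nonneg x) (by push_cast; linarith), (even_two_mul n).pow_abs]

theorem integrable_abs_rpow_mul_exp_neg_mul_sq_mul_pow_two_mul (hb : 0 < b) (hs : -1 < s)
    (n : ℕ) : Integrable fun x : ℝ => |x| ^ s * exp (-b * x ^ 2) * x ^ (2 * n) := by
  simp_rw [mul_right_comm _ (exp _), abs_rpow_mul_pow_two_mul hs]
  exact integrable_abs_rpow_mul_exp_neg_mul_sq hb (lt_add_of_lt_of_nonneg hs (Nat.cast_nonneg _))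

theorem integral_abs_rpow_mul_exp_neg_mul_sq_mul_pow_two_mul (hb : 0 < b) (hs : -1 < s)
    (n : ℕ) : ∫ x : ℝ, |x| ^ s * exp (-b * x ^ 2) * x ^ (2 * n) =
      b ^ (-(s + 1) / 2) * b⁻¹ ^ n * Gamma ((s + 1) / 2 + n) := by
  simp_rw [mul_right_comm _ (exp _), abs_rpow_mul_pow_two_mul hs,
    integral_abs_rpow_mul_exp_neg_mul_sq hb (lt_add_of_lt_of_nonneg hs (Nat.cast_nonneg _))]
  rw [← rpow_natCast, ← rpow_neg_one, ← rpow_mul hb.le, ← rpow_add hb]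
  congr 2 <;> push_cast <;> ring

end GaussianMoments

open Complex in
theorem integral_ofReal_mul_cexp_of_even {g : ℝ → ℝ} (hg : Integrable g)
    (heven : ∀ x, g (-x) = g x) (c : ℝ) :
    ∫ x, (g x : ℂ) * cexp (c * x * I) = ↑(∫ x, g x * Real.cos (c * x)) := by
  have hbdd {h : ℝ → ℝ} (hh : Continuous h) (h1 : ∀ y, |h y| ≤ 1) :
      Integrable fun x => g x * h (c * x) :=
    hg.mul_bdd (by fun_prop) (ae_of_all _ fun x => h1 _)
  have hcos : Integrable fun x => ((g x * Real.cos (c * x) : ℝ) : ℂ) :=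
    (hbdd continuous_cos abs_cos_le_one).ofReal
  have hsin : Integrable fun x => ((g x * Real.sin (c * x) : ℝ) : ℂ) * I :=
    (hbdd continuous_sin abs_sin_le_one).ofReal.mul_const I
  have hodd : ∫ x, g x * Real.sin (c * x) = 0 := by
    have h := integral_neg_eq_self (fun x => g x * Real.sin (c * x)) volume
    simp only [heven, mul_neg, Real.sin_neg, integral_neg] at h
    linarith
  calc ∫ x, (g x : ℂ) * cexp (c * x * I)
      = ∫ x, ((g x * Real.cos (c * x) : ℝ) : ℂ) + ((g x * Real.sin (c * x) : ℝ) : ℂ) * I := by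
        congr 1 with x
        rw [← ofReal_mul, exp_mul_I, ← ofReal_cos, ← ofReal_sin]
        push_cast
        ring
    _ = ↑(∫ x, g x * Real.cos (c * x)) + ↑(∫ x, g x * Real.sin (c * x)) * I := by
        rw [integral_add hcos hsin, integral_mul_const,
          integral_complex_ofReal, integral_complex_ofReal]
    _ = ↑(∫ x, g x * Real.cos (c * x)) := by simp [hodd]

open scoped Nat in
theorem hasSum_integral_mul_cos {g : ℝ → ℝ} (c : ℝ)
    (hg : ∀ n : ℕ, Integrable fun x => g x * x ^ (2 * n))
    (hsum : Summable fun n : ℕ => c ^ (2 * n) / (2 * n)! * ∫ x, |g x| * x ^ (2 * n)) :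
    HasSum (fun n : ℕ => (-1) ^ n * c ^ (2 * n) / (2 * n)! * ∫ x, g x * x ^ (2 * n))
      (∫ x, g x * Real.cos (c * x)) := by
  set F : ℕ → ℝ → ℝ := fun n x => (-1) ^ n * c ^ (2 * n) / (2 * n)! * (g x * x ^ (2 * n))
  have hF (x : ℝ) : HasSum (fun n => F n x) (g x * Real.cos (c * x)) := by
    refine ((Real.hasSum_cos (c * x)).mul_left (g x)).congr_fun fun n => ?_
    simp only [F, mul_pow]
    ring
  have hnorm (n : ℕ) : ∫ x, ‖F n x‖ = c ^ (2 * n) / (2 * n)! * ∫ x, |g x| * x ^ (2 * n) := by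
    rw [← integral_const_mul]
    congr 1 with x
    dsimp only [F]
    simp only [norm_mul, norm_div, norm_pow, norm_neg, norm_one, one_pow, one_mul,
      Real.norm_eq_abs, Nat.abs_cast, (even_two_mul n).pow_abs]
  have h := hasSum_integral_of_summable_integral_norm (F := F) (fun n => (hg n).const_mul _)
    (by simpa only [hnorm] using hsum)
  simp only [F, integral_const_mul] at h
  rwa [integral_congr_ae (ae_of_all _ fun x => (hF x).tsum_eq)] at h

section Pochhammer

open scoped Nat

variable {a b : ℝ}

theorem poch_succ (a : ℝ) (n : ℕ) : poch a (n + 1) = poch a n * (a + n) :=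
  Finset.prod_range_succ _ _

theorem poch_pos (ha : 0 < a) (n : ℕ) : 0 < poch a n :=
  Finset.prod_pos fun k _ => by positivity

theorem Gamma_add_nat_eq_mul_poch (ha : 0 < a) (n : ℕ) :
    Gamma (a + n) = Gamma a * poch a n := by
  induction n with
  | zero => simp [poch]
  | succ n ih =>
    rw [Nat.cast_succ, ← add_assoc, Gamma_add_one (by positivity), ih, poch_succ]
    ring

theorem factorial_two_mul_eq_mul_poch (n : ℕ) :
    ((2 * n)! : ℝ) = 4 ^ n * n ! * poch (1 / 2) n := by
  induction n with
  | zero => simp [poch]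
  | succ n ih =>
    rw [Nat.mul_succ, Nat.factorial_succ, Nat.factorial_succ, poch_succ]
    push_cast [ih, Nat.factorial_succ]
    ring

theorem poch_le_pow_mul_poch (ha : 0 ≤ a) (hb : 0 < b) (n : ℕ) :
    poch a n ≤ max 1 (a / b) ^ n * poch b n := by
  have hM : a ≤ max 1 (a / b) * b := by
    rw [← div_le_iff₀ hb]
    exact le_max_right _ _
  induction n with
  | zero => simp [poch]
  | succ n ih =>
    rw [poch_succ, poch_succ, pow_succ]
    calc poch a n * (a + n) ≤ (max 1 (a / b) ^ n * poch b n) * (max 1 (a / b) * (b + n)) := by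
          have := poch_pos hb n
          gcongr
          nlinarith [le_max_left 1 (a / b), (Nat.cast_nonneg n : (0 : ℝ) ≤ n)]
      _ = max 1 (a / b) ^ n * max 1 (a / b) * (poch b n * (b + n)) := by ring

theorem summable_hyp1F1 (ha : 0 ≤ a) (hb : 0 < b) (z : ℝ) :
    Summable fun n => poch a n / poch b n * z ^ n / n ! := by
  refine Summable.of_norm_bounded (Real.summable_pow_div_factorial (max 1 (a / b) * |z|))
    fun n => ?_
  have hpa : 0 ≤ poch a n := Finset.prod_nonneg fun k _ => by positivity
  rw [Real.norm_eq_abs, abs_div, abs_mul, abs_div, abs_of_nonneg hpa,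
    abs_of_pos (poch_pos hb n), Nat.abs_cast, abs_pow, mul_pow]
  gcongr
  rw [div_le_iff₀ (poch_pos hb n)]
  exact poch_le_pow_mul_poch ha hb n

end Pochhammer

open scoped Nat in
theorem integral_abs_rpow_mul_exp_neg_mul_sq_mul_cos {b s : ℝ} (hb : 0 < b) (hs : -1 < s)
    (c : ℝ) :
    ∫ x, |x| ^ s * exp (-b * x ^ 2) * Real.cos (c * x) =
      b ^ (-(s + 1) / 2) * Gamma ((s + 1) / 2) *
        hyp1F1 ((s + 1) / 2) (1 / 2) (-(c ^ 2 / (4 * b))) := by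
  set a := (s + 1) / 2 with ha
  have ha0 : 0 < a := by linarith
  have hmoment (n : ℕ) : ∫ x, |x| ^ s * exp (-b * x ^ 2) * x ^ (2 * n) =
      b ^ (-a) * b⁻¹ ^ n * (Gamma a * poch a n) := by
    rw [integral_abs_rpow_mul_exp_neg_mul_sq_mul_pow_two_mul hb hs, ← ha,
      Gamma_add_nat_eq_mul_poch ha0, neg_div]
  have hterm (n : ℕ) : c ^ (2 * n) / (2 * n)! * (b ^ (-a) * b⁻¹ ^ n * (Gamma a * poch a n)) =
      b ^ (-a) * Gamma a * (poch a n / poch (1 / 2) n * (c ^ 2 / (4 * b)) ^ n / n !) := by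
    have := (poch_pos one_half_pos n).ne'
    have := hb.ne'
    rw [factorial_two_mul_eq_mul_poch, pow_mul, div_pow, mul_pow, inv_pow]
    field_simp
  have habs (x : ℝ) : |(|x| ^ s * exp (-b * x ^ 2))| = |x| ^ s * exp (-b * x ^ 2) :=
    abs_of_nonneg (by positivity)
  have hsum : HasSum (fun n => b ^ (-a) * Gamma a *
      (poch a n / poch (1 / 2) n * (-(c ^ 2 / (4 * b))) ^ n / n !))
      (∫ x, |x| ^ s * exp (-b * x ^ 2) * Real.cos (c * x)) := by
    refine (hasSum_integral_mul_cos c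
      (integrable_abs_rpow_mul_exp_neg_mul_sq_mul_pow_two_mul hb hs) ?_).congr_fun fun n => ?_
    · simpa only [habs, hmoment, hterm] using
        (summable_hyp1F1 ha0.le one_half_pos (c ^ 2 / (4 * b))).mul_left (b ^ (-a) * Gamma a)
    · rw [neg_pow, hmoment]
      linear_combination (-(-1) ^ n) * hterm n
  rw [← hsum.tsum_eq, tsum_mul_left, hyp1F1, neg_div]

open Complex in
theorem fourier_cexp_neg_sq (ξ : ℝ) :
    𝓕 (fun t : ℝ => cexp (-(t : ℂ) ^ 2)) ξ = ((√π * Real.exp (-π ^ 2 * ξ ^ 2) : ℝ) : ℂ) := by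
  have h := fourierIntegral_gaussian (b := 1) one_pos ((-2 * π * ξ : ℝ) : ℂ)
  rw [Real.fourier_real_eq_integral_exp_smul]
  simp_rw [smul_eq_mul]
  convert h using 1
  · congr 1 with v
    push_cast
    ring_nf
  · rw [Real.sqrt_eq_rpow, ofReal_mul, ofReal_cpow pi_pos.le, ofReal_exp]
    push_cast
    ring_nf

theorem sqrt_pi_mul_two_pi_rpow_mul_pi_sq_rpow (α : ℝ) :
    √π * (2 * π) ^ α * (π ^ 2) ^ (-(1 + α) / 2) = 2 ^ α / √π := by
  rw [eq_div_iff (by positivity), sqrt_eq_rpow, mul_rpow two_pos.le pi_pos.le,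
    ← rpow_natCast, ← rpow_mul pi_pos.le]
  calc π ^ (1 / 2 : ℝ) * (2 ^ α * π ^ α) * π ^ ((2 : ℕ) * (-(1 + α) / 2)) * π ^ (1 / 2 : ℝ)
      = 2 ^ α * π ^ (1 / 2 + α + (2 : ℕ) * (-(1 + α) / 2) + 1 / 2) := by
        rw [rpow_add pi_pos, rpow_add pi_pos, rpow_add pi_pos]
        ring
    _ = 2 ^ α := by
        rw [show 1 / 2 + α + (2 : ℕ) * (-(1 + α) / 2) + 1 / 2 = (0 : ℝ) by push_cast; ring,
          rpow_zero, mul_one]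

theorem fractional_laplacian_gaussian_1d (α : ℝ) (hα : α ∈ Set.Ioo (0 : ℝ) 2) (x : ℝ) :
    ∫ ξ : ℝ,
        (FourierTransform.fourier (fun t : ℝ => Complex.exp (-(t : ℂ) ^ 2)) ξ) *
          ((|2 * π * ξ| ^ α : ℝ) : ℂ) * Complex.exp (2 * π * Complex.I * x * ξ)
      = ((2 ^ α * Real.Gamma ((1 + α) / 2) / Real.Gamma (1 / 2) *
          hyp1F1 ((1 + α) / 2) (1 / 2) (-x ^ 2) : ℝ) : ℂ) := by
  have hα' : -1 < α := by linarith [hα.1]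
  have hsplit (ξ : ℝ) :
      𝓕 (fun t : ℝ => Complex.exp (-(t : ℂ) ^ 2)) ξ * ((|2 * π * ξ| ^ α : ℝ) : ℂ) *
        Complex.exp (2 * π * Complex.I * x * ξ) =
      ((√π * (2 * π) ^ α : ℝ) : ℂ) * (((|ξ| ^ α * Real.exp (-π ^ 2 * ξ ^ 2) : ℝ) : ℂ) *
        Complex.exp ((2 * π * x : ℝ) * ξ * Complex.I)) := by
    rw [fourier_cexp_neg_sq, abs_mul, abs_of_pos (by positivity : 0 < 2 * π),
      mul_rpow (by positivity) (abs_nonneg ξ)]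
    push_cast
    ring_nf
  have hg : Integrable fun ξ : ℝ => |ξ| ^ α * Real.exp (-π ^ 2 * ξ ^ 2) :=
    integrable_abs_rpow_mul_exp_neg_mul_sq (by positivity) hα'
  simp_rw [hsplit]
  rw [integral_const_mul, integral_ofReal_mul_cexp_of_even hg (fun ξ => by simp),
    integral_abs_rpow_mul_exp_neg_mul_sq_mul_cos (by positivity) hα', ← Complex.ofReal_mul]
  have hz : (2 * π * x) ^ 2 / (4 * π ^ 2) = x ^ 2 := by
    field_simp
    ring
  rw [hz, add_comm α 1, Real.Gamma_one_half_eq]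
  congr 1
  linear_combination (Real.Gamma ((1 + α) / 2) * hyp1F1 ((1 + α) / 2) (1 / 2) (-x ^ 2)) *
    sqrt_pi_mul_two_pi_rpow_mul_pi_sq_rpow α
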